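/- Let B be a quasi-greedy basis in a real Banach space X and define the expansional best approximation σ̃_N(x) = inf{‖x − S_Γ(x)‖ : |Γ| ≤ N} and ẽ_N = sup_x ‖x − G_N(x)‖/σ̃_N(x). Then ẽ_N ≥ c·μ(N) for a constant c > 0 depending only on the quasi-greedy constant; combined with the upper bound, μ(N) ≲ ẽ_N ≤ e_N ≲ μ(N) log N. -/

import Mathlib

open Finset Filter

/-- A (seminormalized Schauder) basis of a real normed space, given by the basis
vectors `e k` together with the coefficient functionals `coeff k`. -/
structure QGBasis (X : Type*) [NormedAddCommGroup X] [NormedSpace ℝ X] where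
  e : ℕ → X
  coeff : ℕ → X → ℝ
  coeff_add : ∀ k x y, coeff k (x + y) = coeff k x + coeff k y
  coeff_smul : ∀ (k : ℕ) (c : ℝ) (x : X), coeff k (c • x) = c * coeff k x
  coeff_e : ∀ j k, coeff j (e k) = if j = k then 1 else 0
  expansion : ∀ x : X,
    Tendsto (fun N => ∑ k ∈ Finset.range N, coeff k x • e k) atTop (nhds x)
  c_norm : ℝ
  C_norm : ℝ
  c_norm_pos : 0 < c_norm
  norm_e_ge : ∀ k, c_norm ≤ ‖e k‖
  norm_e_le : ∀ k, ‖e k‖ ≤ C_norm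

namespace QGBasis

variable {X : Type*} [NormedAddCommGroup X] [NormedSpace ℝ X] (B : QGBasis X)

/-- `π` enumerates the coefficients of `x` in decreasing order of modulus;
position `k` (zero-based) carries the `(k+1)`-st largest coefficient. -/
def IsGreedyPerm (x : X) (π : ℕ → ℕ) : Prop :=
  Function.Bijective π ∧ ∀ k, |B.coeff (π (k + 1)) x| ≤ |B.coeff (π k) x|

/-- The thresholding greedy approximation of order `N` associated to the
greedy enumeration `π`. -/
def G (π : ℕ → ℕ) (N : ℕ) (x : X) : X :=
  ∑ k ∈ Finset.range N, B.coeff (π k) x • B.e (π k)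

/-- `B` is quasi-greedy with constant `K`. -/
def QuasiGreedyWith (K : ℝ) : Prop :=
  ∀ (x : X) (π : ℕ → ℕ), B.IsGreedyPerm x π → ∀ N,
    ‖B.G π N x‖ ≤ K * ‖x‖ ∧ ‖x - B.G π N x‖ ≤ K * ‖x‖

/-- Coordinate projection onto the index set `Γ`. -/
def S (Γ : Finset ℕ) (x : X) : X := ∑ k ∈ Γ, B.coeff k x • B.e k

/-- Right democracy function. -/
noncomputable def hr (N : ℕ) : ℝ :=
  sSup {r | ∃ Γ : Finset ℕ, Γ.card = N ∧ r = ‖∑ k ∈ Γ, B.e k‖}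

/-- Left democracy function. -/
noncomputable def hl (N : ℕ) : ℝ :=
  sInf {r | ∃ Γ : Finset ℕ, Γ.card = N ∧ r = ‖∑ k ∈ Γ, B.e k‖}

/-- The democracy ratio `μ(N) = sup_{1 ≤ k ≤ N} h_r(k)/h_l(k)`. -/
noncomputable def mu (N : ℕ) : ℝ :=
  sSup {r | ∃ k, 1 ≤ k ∧ k ≤ N ∧ r = B.hr k / B.hl k}

/-- Best `N`-term approximation error. -/
noncomputable def sigma (N : ℕ) (x : X) : ℝ :=
  sInf {r | ∃ (Γ : Finset ℕ) (b : ℕ → ℝ),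
    Γ.card ≤ N ∧ r = ‖x - ∑ k ∈ Γ, b k • B.e k‖}

/-- `Γ` is a greedy set for `x`: every coefficient inside dominates every
coefficient outside. -/
def IsGreedySet (x : X) (Γ : Finset ℕ) : Prop :=
  ∀ j ∈ Γ, ∀ i ∉ Γ, |B.coeff i x| ≤ |B.coeff j x|

end QGBasis

namespace QGBasis

variable {X : Type*} [NormedAddCommGroup X] [NormedSpace ℝ X] (B : QGBasis X)

/-- Expansional best `N`-term approximation error. -/
noncomputable def sigmaT (N : ℕ) (x : X) : ℝ :=
  sInf {r | ∃ Γ : Finset ℕ, Γ.card ≤ N ∧ r = ‖x - B.S Γ x‖}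

/-- `e_N = sup_x ‖x − G_N(x)‖/σ_N(x)` with the convention `0/0 = 1`. -/
noncomputable def eN (N : ℕ) : ℝ :=
  sSup ({1} ∪ {r | ∃ (x : X) (π : ℕ → ℕ), B.IsGreedyPerm x π ∧
    B.sigma N x ≠ 0 ∧ r = ‖x - B.G π N x‖ / B.sigma N x})

/-- `ẽ_N = sup_x ‖x − G_N(x)‖/σ̃_N(x)` with the convention `0/0 = 1`. -/
noncomputable def tildeEN (N : ℕ) : ℝ :=
  sSup ({1} ∪ {r | ∃ (x : X) (π : ℕ → ℕ), B.IsGreedyPerm x π ∧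
    B.sigmaT N x ≠ 0 ∧ r = ‖x - B.G π N x‖ / B.sigmaT N x})

end QGBasis

/-!
Upper bound. For `z` supported on `Γ` with `|Γ| ≤ N`, `u = x - z` and `A` the greedy set of `x`,
`x - G_N x = (u - S_A u) - S_{Γ \ A} u + S_{Γ \ A} x`. Quasi-greediness gives
`t ‖𝟙_A‖ ≤ 4 K² ‖y‖` whenever all coefficients of `y` on `A` have modulus at least `t`; cutting
the coefficients of `y` into `log₂ N + 1` dyadic levels turns this into `‖S_D y‖ ≲ K² log N ‖y‖`
for `|D| ≤ N`, and democracy bounds `‖S_{Γ \ A} x‖` by `8 K² μ(N) ‖u‖`. So `e_N ≲ μ(N) log N`;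
in particular the suprema defining `e_N` and `ẽ_N` are finite.

Lower bound. For `|Γ| = |Γ'| ≤ N`, the vector `2 • 𝟙_P + 𝟙_{Γ \ Γ'}`, with `P ⊇ Γ'` of size `N`
disjoint from `Γ \ Γ'`, has greedy error `𝟙_{Γ \ Γ'}` and expansional error at most
`2 ‖𝟙_{Γ'}‖`; together with `‖𝟙_{Γ ∩ Γ'}‖ ≤ K ‖𝟙_{Γ'}‖` this gives
`h_r(k) ≤ (K + 2 ẽ_N) h_l(k)` for `k ≤ N`.
-/

theorem two_pow_log_floor_le_and_lt {r : ℝ} (hr : 1 ≤ r) :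
    (2 : ℝ) ^ Nat.log 2 ⌊r⌋₊ ≤ r ∧ r < 2 ^ (Nat.log 2 ⌊r⌋₊ + 1) := by
  have hfloor : ⌊r⌋₊ ≠ 0 := (Nat.floor_pos.mpr hr).ne'
  constructor
  · calc (2 : ℝ) ^ Nat.log 2 ⌊r⌋₊ = ((2 ^ Nat.log 2 ⌊r⌋₊ : ℕ) : ℝ) := by push_cast; rfl
      _ ≤ ⌊r⌋₊ := by exact_mod_cast Nat.pow_log_le_self 2 hfloor
      _ ≤ r := Nat.floor_le (by linarith)
  · have h := (Nat.floor_lt (by linarith : 0 ≤ r)).mp (Nat.lt_pow_succ_log_self one_lt_two ⌊r⌋₊)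
    exact_mod_cast h

theorem exists_perm_nat_extending {n : ℕ} (σ : Equiv.Perm (Fin n)) :
    ∃ π : Equiv.Perm ℕ, (∀ k (hk : k < n), π k = σ ⟨k, hk⟩) ∧ ∀ k, n ≤ k → π k = k :=
  ⟨Equiv.Perm.ofSubtype (Fin.equivSubtype.permCongr σ),
    fun _ hk => Equiv.Perm.ofSubtype_apply_of_mem (p := (· < n)) _ hk,
    fun _ hk => Equiv.Perm.ofSubtype_apply_of_not_mem _ (not_lt.mpr hk)⟩

theorem exists_finset_disjoint_card_eq {α : Type*} [Infinite α] (s : Finset α) (n : ℕ) :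
    ∃ D : Finset α, Disjoint D s ∧ D.card = n := by
  obtain ⟨D, hD, hcard⟩ := s.finite_toSet.infinite_compl.exists_subset_card_eq n
  exact ⟨D, Finset.disjoint_coe.mp (Set.subset_compl_iff_disjoint_right.mp hD), hcard⟩

section SumsOfVectors

variable {ι E : Type*} [SeminormedAddCommGroup E] [NormedSpace ℝ E]

theorem norm_sum_smul_le_card_mul (v : ι → E) (T : Finset ι) {c : ι → ℝ} {M C : ℝ}
    (hc : ∀ k ∈ T, |c k| ≤ M) (hv : ∀ k, ‖v k‖ ≤ C) :
    ‖∑ k ∈ T, c k • v k‖ ≤ T.card * (M * C) := by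
  refine (norm_sum_le _ _).trans ?_
  rw [← nsmul_eq_mul]
  refine Finset.sum_le_card_nsmul _ _ _ fun k hk => ?_
  rw [norm_smul, Real.norm_eq_abs]
  exact mul_le_mul (hc k hk) (hv k) (norm_nonneg _) ((abs_nonneg _).trans (hc k hk))

theorem norm_sum_smul_le_of_nonneg_of_le (v : ι → E) (D : Finset ι) {c : ι → ℝ} {M R : ℝ}
    (hM : 0 ≤ M) (hc : ∀ k ∈ D, 0 ≤ c k ∧ c k ≤ M) (hR : ∀ A ⊆ D, ‖∑ k ∈ A, v k‖ ≤ R) :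
    ‖∑ k ∈ D, c k • v k‖ ≤ M * R := by
  classical
  induction D using Finset.strongInduction generalizing c M with
  | H D ih =>
    rcases D.eq_empty_or_nonempty with rfl | hne
    · simpa using mul_nonneg hM (by simpa using hR ∅ (Finset.empty_subset _))
    obtain ⟨k₀, hk₀, hmin⟩ := D.exists_min_image c hne
    have hsplit : ∑ k ∈ D, c k • v k
        = c k₀ • ∑ k ∈ D, v k + ∑ k ∈ D.erase k₀, (c k - c k₀) • v k := by
      rw [Finset.sum_erase _ (by simp), Finset.smul_sum, ← Finset.sum_add_distrib]
      exact Finset.sum_congr rfl fun k _ => by rw [← add_smul, add_sub_cancel]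
    have hrest : ‖∑ k ∈ D.erase k₀, (c k - c k₀) • v k‖ ≤ (M - c k₀) * R :=
      ih _ (Finset.erase_ssubset hk₀) (by linarith [(hc k₀ hk₀).2])
        (fun k hk => ⟨by linarith [hmin k (Finset.mem_of_mem_erase hk)],
          by linarith [(hc k (Finset.mem_of_mem_erase hk)).2, (hc k₀ hk₀).1]⟩)
        (fun A hA => hR A (hA.trans (Finset.erase_subset _ _)))
    calc ‖∑ k ∈ D, c k • v k‖
        ≤ c k₀ * ‖∑ k ∈ D, v k‖ + ‖∑ k ∈ D.erase k₀, (c k - c k₀) • v k‖ := by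
          rw [hsplit]
          refine (norm_add_le _ _).trans_eq ?_
          rw [norm_smul, Real.norm_of_nonneg (hc k₀ hk₀).1]
      _ ≤ c k₀ * R + (M - c k₀) * R :=
          add_le_add (mul_le_mul_of_nonneg_left (hR D le_rfl) (hc k₀ hk₀).1) hrest
      _ = M * R := by ring

theorem norm_sum_smul_le_of_abs_le (v : ι → E) (D : Finset ι) {c : ι → ℝ} {M R : ℝ}
    (hM : 0 ≤ M) (hc : ∀ k ∈ D, |c k| ≤ M) (hR : ∀ A ⊆ D, ‖∑ k ∈ A, v k‖ ≤ R) :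
    ‖∑ k ∈ D, c k • v k‖ ≤ 2 * M * R := by
  classical
  have hpos : ‖∑ k ∈ D with 0 ≤ c k, c k • v k‖ ≤ M * R :=
    norm_sum_smul_le_of_nonneg_of_le v _ hM
      (fun k hk => by
        rw [Finset.mem_filter] at hk
        exact ⟨hk.2, (le_abs_self _).trans (hc k hk.1)⟩)
      (fun A hA => hR A (hA.trans (Finset.filter_subset _ _)))
  have hneg : ‖∑ k ∈ D with ¬0 ≤ c k, (-c k) • v k‖ ≤ M * R :=
    norm_sum_smul_le_of_nonneg_of_le v _ hM
      (fun k hk => by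
        rw [Finset.mem_filter] at hk
        exact ⟨by linarith [hk.2], (neg_le_abs _).trans (hc k hk.1)⟩)
      (fun A hA => hR A (hA.trans (Finset.filter_subset _ _)))
  simp only [neg_smul, Finset.sum_neg_distrib, norm_neg] at hneg
  rw [← Finset.sum_filter_add_sum_filter_not D (fun k => 0 ≤ c k)]
  linarith [norm_add_le (∑ k ∈ D with 0 ≤ c k, c k • v k) (∑ k ∈ D with ¬0 ≤ c k, c k • v k)]

theorem norm_sum_range_smul_le_of_monotoneOn (g : ℕ → E) {c : ℕ → ℝ} {n : ℕ} {R : ℝ}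
    (hc : MonotoneOn c (Set.Iio n)) (hc01 : ∀ i < n, 0 ≤ c i ∧ c i ≤ 1)
    (hR : ∀ m ≤ n, ‖∑ i ∈ Finset.range m, g i‖ ≤ R) :
    ‖∑ i ∈ Finset.range n, c i • g i‖ ≤ 2 * R := by
  rcases Nat.eq_zero_or_pos n with rfl | hn
  · simpa using hR 0 le_rfl
  have hstep : ∀ i ∈ Finset.range (n - 1), 0 ≤ c (i + 1) - c i := fun i hi => by
    rw [Finset.mem_range] at hi
    exact sub_nonneg.mpr (hc (Set.mem_Iio.mpr (by omega)) (Set.mem_Iio.mpr (by omega)) (by omega))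
  rw [Finset.sum_range_by_parts]
  calc _ ≤ c (n - 1) * R + ∑ i ∈ Finset.range (n - 1), (c (i + 1) - c i) * R := by
        refine (norm_sub_le _ _).trans (add_le_add ?_ ((norm_sum_le _ _).trans
          (Finset.sum_le_sum fun i hi => ?_)))
        · rw [norm_smul, Real.norm_of_nonneg (hc01 _ (by omega)).1]
          exact mul_le_mul_of_nonneg_left (hR n le_rfl) (hc01 _ (by omega)).1
        · rw [norm_smul, Real.norm_of_nonneg (hstep i hi)]
          exact mul_le_mul_of_nonneg_left (hR _ (by rw [Finset.mem_range] at hi; omega))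
            (hstep i hi)
    _ = (2 * c (n - 1) - c 0) * R := by
        rw [← Finset.sum_mul, Finset.sum_range_sub (fun i => c i)]
        ring
    _ ≤ 2 * R := by
        have hR0 : 0 ≤ R := (norm_nonneg _).trans (hR 0 (Nat.zero_le _))
        have h0 := hc01 0 hn
        have h1 := hc01 (n - 1) (by omega)
        nlinarith

/-- Split `D` into the dyadic levels `b / 2 ^ (j + 1) < |c k| ≤ b / 2 ^ j`, `j < J`, and a tail
of small coefficients; each level costs `4 * R`. -/
theorem norm_sum_smul_le_dyadic (v : ι → E) (D : Finset ι) {c : ι → ℝ} {b C R : ℝ} (J : ℕ)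
    (hb : 0 ≤ b) (hC : 0 ≤ C) (hcb : ∀ k ∈ D, |c k| ≤ b) (hv : ∀ k, ‖v k‖ ≤ C)
    (hR : ∀ t > 0, ∀ A ⊆ D, (∀ k ∈ A, t ≤ |c k|) → t * ‖∑ k ∈ A, v k‖ ≤ R) :
    ‖∑ k ∈ D, c k • v k‖ ≤ 4 * J * R + D.card * (b / 2 ^ J * C) := by
  classical
  have hR0 : 0 ≤ R := by simpa using hR 1 one_pos ∅ (Finset.empty_subset _)
  set D' := D.filter (fun k => b / 2 ^ J < |c k|)
  set level : ι → ℕ := fun k => Nat.log 2 ⌊b / |c k|⌋₊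
  have hlevel : ∀ k ∈ D', 0 < |c k| ∧
      2 ^ level k ≤ b / |c k| ∧ b / |c k| < 2 ^ (level k + 1) ∧ level k < J := by
    intro k hk
    obtain ⟨hkD, hk⟩ := Finset.mem_filter.mp hk
    have hck : 0 < |c k| := lt_of_le_of_lt (by positivity) hk
    have hr : 1 ≤ b / |c k| := (one_le_div hck).mpr (hcb k hkD)
    obtain ⟨hlow, hhigh⟩ := two_pow_log_floor_le_and_lt hr
    refine ⟨hck, hlow, hhigh, (pow_lt_pow_iff_right₀ (one_lt_two : (1 : ℝ) < 2)).mp ?_⟩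
    calc (2 : ℝ) ^ level k ≤ b / |c k| := hlow
      _ < 2 ^ J := by rwa [div_lt_iff₀ hck, mul_comm, ← div_lt_iff₀ (by positivity)]
  have hfiber : ∀ j ∈ Finset.range J,
      ‖∑ k ∈ D' with level k = j, c k • v k‖ ≤ 4 * R := by
    intro j _
    rcases (D'.filter (level · = j)).eq_empty_or_nonempty with h | ⟨k₀, hk₀⟩
    · rw [h, Finset.sum_empty, norm_zero]
      positivity
    have hbpos : 0 < b := by
      have hk₀D' := (Finset.mem_filter.mp hk₀).1
      exact (hlevel k₀ hk₀D').1.trans_le (hcb k₀ (Finset.mem_filter.mp hk₀D').1)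
    have ht : 0 < b / 2 ^ (j + 1) := by positivity
    calc ‖∑ k ∈ D' with level k = j, c k • v k‖
        ≤ 2 * (b / 2 ^ j) * (R / (b / 2 ^ (j + 1))) := by
          refine norm_sum_smul_le_of_abs_le v _ (by positivity) (fun k hk => ?_) fun A hA => ?_
          · obtain ⟨hkD', rfl⟩ := Finset.mem_filter.mp hk
            obtain ⟨hck, hlow, -⟩ := hlevel k hkD'
            rwa [le_div_iff₀ (by positivity), mul_comm, ← le_div_iff₀ hck]
          · rw [le_div_iff₀ ht, mul_comm]
            refine hR _ ht A (hA.trans ((Finset.filter_subset _ _).trans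
              (Finset.filter_subset _ _))) fun k hk => ?_
            obtain ⟨hkD', rfl⟩ := Finset.mem_filter.mp (hA hk)
            obtain ⟨hck, -, hhigh, -⟩ := hlevel k hkD'
            rw [div_le_iff₀ (by positivity), mul_comm, ← div_le_iff₀ hck]
            exact hhigh.le
      _ = 4 * R := by
          field_simp
          ring
  have hlevels : ‖∑ k ∈ D', c k • v k‖ ≤ 4 * J * R := by
    rw [← Finset.sum_fiberwise_of_maps_to (t := Finset.range J)
      (fun k hk => Finset.mem_range.mpr (hlevel k hk).2.2.2)]
    refine (norm_sum_le _ _).trans ((Finset.sum_le_sum hfiber).trans_eq ?_)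
    simp only [Finset.sum_const, Finset.card_range, nsmul_eq_mul]
    ring
  have htail : ‖∑ k ∈ D with ¬b / 2 ^ J < |c k|, c k • v k‖ ≤ D.card * (b / 2 ^ J * C) := by
    refine (norm_sum_smul_le_card_mul v _ (fun k hk => not_lt.mp (Finset.mem_filter.mp hk).2)
      hv).trans (mul_le_mul_of_nonneg_right ?_ (by positivity))
    exact_mod_cast Finset.card_filter_le _ _
  rw [← Finset.sum_filter_add_sum_filter_not D (fun k => b / 2 ^ J < |c k|)]
  exact (norm_add_le _ _).trans (add_le_add hlevels htail)

end SumsOfVectors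

namespace QGBasis

variable {X : Type*} [NormedAddCommGroup X] [NormedSpace ℝ X]

section Basic

variable (B : QGBasis X)

def coeffHom (k : ℕ) : X →+ ℝ := AddMonoidHom.mk' (B.coeff k) (B.coeff_add k)

theorem coeff_sub (k : ℕ) (x y : X) : B.coeff k (x - y) = B.coeff k x - B.coeff k y :=
  map_sub (B.coeffHom k) x y

theorem coeff_sum {ι : Type*} (k : ℕ) (T : Finset ι) (f : ι → X) :
    B.coeff k (∑ i ∈ T, f i) = ∑ i ∈ T, B.coeff k (f i) :=
  map_sum (B.coeffHom k) f T

theorem coeff_sum_smul (j : ℕ) (T : Finset ℕ) (c : ℕ → ℝ) :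
    B.coeff j (∑ k ∈ T, c k • B.e k) = if j ∈ T then c j else 0 := by
  simp only [coeff_sum, coeff_smul, coeff_e, mul_ite, mul_one, mul_zero, Finset.sum_ite_eq]

theorem coeff_S (j : ℕ) (Γ : Finset ℕ) (x : X) :
    B.coeff j (B.S Γ x) = if j ∈ Γ then B.coeff j x else 0 :=
  B.coeff_sum_smul j Γ _

theorem S_sum_smul (Γ T : Finset ℕ) (c : ℕ → ℝ) :
    B.S Γ (∑ k ∈ T, c k • B.e k) = ∑ k ∈ Γ ∩ T, c k • B.e k := by
  simp only [S, coeff_sum_smul, ite_smul, zero_smul, Finset.sum_ite_mem]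

theorem S_sub (Γ : Finset ℕ) (x y : X) : B.S Γ (x - y) = B.S Γ x - B.S Γ y := by
  simp only [S, coeff_sub, sub_smul, Finset.sum_sub_distrib]

theorem sum_smul_sub_S (T Δ : Finset ℕ) (c : ℕ → ℝ) :
    ∑ k ∈ T, c k • B.e k - B.S Δ (∑ k ∈ T, c k • B.e k) = ∑ k ∈ T \ Δ, c k • B.e k := by
  rw [S_sum_smul, sub_eq_iff_eq_add', Finset.inter_comm, Finset.sum_inter_add_sum_sdiff]

theorem G_eq_S {π : ℕ → ℕ} (hπ : Function.Injective π) (N : ℕ) (x : X) :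
    B.G π N x = B.S ((Finset.range N).image π) x := by
  rw [G, S, Finset.sum_image fun a _ b _ h => hπ h]

theorem C_norm_pos : 0 < B.C_norm :=
  B.c_norm_pos.trans_le ((B.norm_e_ge 0).trans (B.norm_e_le 0))

/-- Sort the indices of a large enough range by decreasing modulus, breaking ties in favour of
`Γ`. -/
theorem exists_isGreedyPerm_image_range_eq {x : X} {T : Finset ℕ}
    (hx : ∀ k ∉ T, B.coeff k x = 0) {Γ : Finset ℕ} (hΓ : B.IsGreedySet x Γ) :
    ∃ π, B.IsGreedyPerm x π ∧ (Finset.range Γ.card).image π = Γ := by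
  classical
  obtain ⟨n, hn⟩ := (T ∪ Γ).exists_nat_subset_range
  let key : Fin n → ℝ ×ₗ Bool := fun i => toLex (-|B.coeff i x|, decide ((i : ℕ) ∉ Γ))
  let σ := Tuple.sort key
  have hsorted : Monotone (key ∘ σ) := Tuple.monotone_sort key
  obtain ⟨π, hπ_lt, hπ_ge⟩ := exists_perm_nat_extending σ
  have hfront : ∀ i j : Fin n, j ≤ i → (σ i : ℕ) ∈ Γ → (σ j : ℕ) ∈ Γ := by
    intro i j hji hi
    by_contra hj
    have hlt : key (σ i) < key (σ j) := by
      refine Prod.Lex.toLex_lt_toLex.mpr ?_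
      rcases (hΓ _ hi _ hj).lt_or_eq with h | h
      · exact Or.inl (neg_lt_neg h)
      · exact Or.inr ⟨by simp [h], by simp [hi, hj]⟩
    exact hlt.not_ge (hsorted hji)
  set m := (Finset.univ.filter fun i : Fin n => (σ i : ℕ) ∈ Γ).card
  have hm : ∀ i : Fin n, (i : ℕ) < m ↔ (σ i : ℕ) ∈ Γ :=
    fun i => Fin.lt_card_filter_univ_iff_apply_of_imp _ hfront
  have hprefix : (Finset.range m).image π = Γ := by
    ext j
    simp only [Finset.mem_image, Finset.mem_range]
    constructor
    · rintro ⟨k, hk, rfl⟩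
      have hkn : k < n := hk.trans_le ((Finset.card_filter_le _ _).trans (Finset.card_fin n).le)
      rw [hπ_lt k hkn]
      exact (hm ⟨k, hkn⟩).mp hk
    · intro hj
      have hjn : j < n := Finset.mem_range.mp (hn (Finset.mem_union_right _ hj))
      refine ⟨σ.symm ⟨j, hjn⟩, (hm _).mpr (by simpa using hj), ?_⟩
      rw [hπ_lt _ (Fin.is_lt _)]
      simp
  have hcard : Γ.card = m := by
    rw [← hprefix, Finset.card_image_of_injective _ π.injective, Finset.card_range]
  refine ⟨π, ⟨π.bijective, fun k => ?_⟩, hcard ▸ hprefix⟩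
  by_cases hk : k + 1 < n
  · rw [hπ_lt k (by omega), hπ_lt (k + 1) hk]
    have := Prod.Lex.monotone_fst _ _ (hsorted (Fin.mk_le_mk.mpr (Nat.le_succ k)) :
      key (σ ⟨k, by omega⟩) ≤ key (σ ⟨k + 1, hk⟩))
    simpa only [key, Function.comp, ofLex_toLex, neg_le_neg_iff] using this
  · have hT : π (k + 1) ∉ T := fun h => by
      have := Finset.mem_range.mp (hn (Finset.mem_union_left _ h))
      rw [hπ_ge _ (by omega)] at this
      omega
    rw [hx _ hT, abs_zero]
    exact abs_nonneg _

/-- A vector with infinitely many nonzero and some zero coefficients has no greedy enumeration, so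
`QuasiGreedyWith` says nothing about it directly: estimates are proved for finitely supported
vectors and passed to the limit along the partial sums of the expansion. -/
theorem le_mul_norm_of_eventually_le_mul_norm_S_range {x : X} {a C : ℝ}
    (h : ∀ᶠ n in atTop, a ≤ C * ‖B.S (Finset.range n) x‖) : a ≤ C * ‖x‖ :=
  ge_of_tendsto ((B.expansion x).norm.const_mul C) h

theorem norm_sum_e_le_card_mul (Γ : Finset ℕ) : ‖∑ k ∈ Γ, B.e k‖ ≤ Γ.card * B.C_norm := by
  simpa using norm_sum_smul_le_card_mul B.e Γ (c := fun _ => 1) (M := 1)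
    (fun _ _ => abs_one.le) B.norm_e_le

theorem norm_sum_e_le_hr {Γ : Finset ℕ} {k : ℕ} (h : Γ.card = k) : ‖∑ j ∈ Γ, B.e j‖ ≤ B.hr k :=
  le_csSup ⟨k * B.C_norm, by rintro r ⟨Γ', rfl, rfl⟩; exact B.norm_sum_e_le_card_mul Γ'⟩
    ⟨Γ, h, rfl⟩

theorem hl_le_norm_sum_e {Γ : Finset ℕ} {k : ℕ} (h : Γ.card = k) : B.hl k ≤ ‖∑ j ∈ Γ, B.e j‖ :=
  csInf_le ⟨0, by rintro r ⟨Γ', -, rfl⟩; exact norm_nonneg _⟩ ⟨Γ, h, rfl⟩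

theorem hr_le_mul_hl {k : ℕ} {C : ℝ} (hC : 0 < C)
    (h : ∀ Γ Γ' : Finset ℕ, Γ.card = k → Γ'.card = k → ‖∑ j ∈ Γ, B.e j‖ ≤ C * ‖∑ j ∈ Γ', B.e j‖) :
    B.hr k ≤ C * B.hl k := by
  have hne : ∀ k : ℕ, {r | ∃ Γ : Finset ℕ, Γ.card = k ∧ r = ‖∑ j ∈ Γ, B.e j‖}.Nonempty :=
    fun k => ⟨_, Finset.range k, Finset.card_range k, rfl⟩
  refine csSup_le (hne k) ?_
  rintro r ⟨Γ, hΓ, rfl⟩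
  rw [mul_comm, ← div_le_iff₀ hC]
  refine le_csInf (hne k) ?_
  rintro r ⟨Γ', hΓ', rfl⟩
  rw [div_le_iff₀ hC, mul_comm]
  exact h Γ Γ' hΓ hΓ'

theorem mu_nonneg (N : ℕ) : 0 ≤ B.mu N := by
  refine Real.sSup_nonneg fun r ⟨k, _, _, hr⟩ => hr ▸ div_nonneg ?_ ?_
  · exact (norm_nonneg _).trans (B.norm_sum_e_le_hr (Finset.card_range k))
  · exact Real.sInf_nonneg fun r ⟨Γ, _, hr⟩ => hr ▸ norm_nonneg _

theorem div_le_mu {N k : ℕ} (h1 : 1 ≤ k) (h2 : k ≤ N) : B.hr k / B.hl k ≤ B.mu N := by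
  refine le_csSup (Set.Finite.bddAbove ?_) ⟨k, h1, h2, rfl⟩
  refine ((Set.finite_Icc 1 N).image fun k => B.hr k / B.hl k).subset ?_
  rintro r ⟨k, h1, h2, rfl⟩
  exact ⟨k, ⟨h1, h2⟩, rfl⟩

noncomputable def lebesgueBound (K : ℝ) (N : ℕ) : ℝ :=
  1 + 2 * (16 * K ^ 2 * (Nat.log 2 N + 1) + K * B.C_norm / B.c_norm) + 8 * K ^ 2 * B.mu N

theorem sigma_nonneg (N : ℕ) (x : X) : 0 ≤ B.sigma N x :=
  Real.sInf_nonneg fun _ ⟨_, _, _, hr⟩ => hr ▸ norm_nonneg _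

theorem sigmaT_nonneg (N : ℕ) (x : X) : 0 ≤ B.sigmaT N x :=
  Real.sInf_nonneg fun _ ⟨_, _, hr⟩ => hr ▸ norm_nonneg _

theorem sigmaT_le_norm_sub_S {N : ℕ} (x : X) {Γ : Finset ℕ} (hΓ : Γ.card ≤ N) :
    B.sigmaT N x ≤ ‖x - B.S Γ x‖ :=
  csInf_le ⟨0, fun _ ⟨_, _, hr⟩ => hr ▸ norm_nonneg _⟩ ⟨Γ, hΓ, rfl⟩

theorem sigma_le_sigmaT (N : ℕ) (x : X) : B.sigma N x ≤ B.sigmaT N x :=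
  csInf_le_csInf ⟨0, fun _ ⟨_, _, _, hr⟩ => hr ▸ norm_nonneg _⟩ ⟨_, ∅, by simp, rfl⟩
    fun _ ⟨Γ, hΓ, hr⟩ => ⟨Γ, fun k => B.coeff k x, hΓ, hr⟩

end Basic

variable {B : QGBasis X}

theorem coeff_S_range_of_lt {j n : ℕ} (x : X) (h : j < n) :
    B.coeff j (B.S (Finset.range n) x) = B.coeff j x := by
  rw [coeff_S, if_pos (Finset.mem_range.mpr h)]

theorem coeff_S_of_notMem {j : ℕ} {Γ : Finset ℕ} (x : X) (h : j ∉ Γ) :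
    B.coeff j (B.S Γ x) = 0 := by
  rw [coeff_S, if_neg h]

theorem coeff_sub_sum_smul_of_notMem (x : X) {Γ : Finset ℕ} (b : ℕ → ℝ) {k : ℕ} (hk : k ∉ Γ) :
    B.coeff k (x - ∑ j ∈ Γ, b j • B.e j) = B.coeff k x := by
  rw [coeff_sub, coeff_sum_smul, if_neg hk, sub_zero]

theorem IsGreedyPerm.abs_coeff_le {x : X} {π : ℕ → ℕ} (hπ : B.IsGreedyPerm x π)
    {m n : ℕ} (h : m ≤ n) : |B.coeff (π n) x| ≤ |B.coeff (π m) x| := by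
  induction n, h using Nat.le_induction with
  | base => exact le_rfl
  | succ n _ ih => exact (hπ.2 n).trans ih

namespace QuasiGreedyWith

variable {K : ℝ} (hK : B.QuasiGreedyWith K)
include hK

theorem norm_S_le {x : X} {T Γ : Finset ℕ} (hx : ∀ k ∉ T, B.coeff k x = 0)
    (hΓ : B.IsGreedySet x Γ) : ‖B.S Γ x‖ ≤ K * ‖x‖ := by
  obtain ⟨π, hπ, hprefix⟩ := B.exists_isGreedyPerm_image_range_eq hx hΓ
  simpa [B.G_eq_S hπ.1.1, hprefix] using (hK x π hπ Γ.card).1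

theorem one_le : 1 ≤ K := by
  have hS : B.S {0} (B.e 0) = B.e 0 := by simp [S, coeff_e]
  have h := hK.norm_S_le (x := B.e 0) (T := {0}) (Γ := {0})
    (fun k hk => by simpa [coeff_e] using hk)
    (fun j hj i hi => by simp_all [coeff_e])
  rw [hS] at h
  have := B.c_norm_pos.trans_le (B.norm_e_ge 0)
  nlinarith

theorem c_norm_mul_abs_coeff_le (x : X) (j : ℕ) : B.c_norm * |B.coeff j x| ≤ K * ‖x‖ := by
  refine B.le_mul_norm_of_eventually_le_mul_norm_S_range
    (Filter.eventually_atTop.mpr ⟨j + 1, fun n hn => ?_⟩)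
  set y := B.S (Finset.range n) x
  obtain ⟨π, hπ, -⟩ := B.exists_isGreedyPerm_image_range_eq (x := y)
    (fun k hk => coeff_S_of_notMem x hk) (Γ := ∅) (by simp [IsGreedySet])
  obtain ⟨m, hm⟩ := hπ.1.2 j
  have hG : ‖B.G π 1 y‖ = |B.coeff (π 0) y| * ‖B.e (π 0)‖ := by
    simp [G, norm_smul]
  calc B.c_norm * |B.coeff j x| = B.c_norm * |B.coeff j y| := by
        rw [coeff_S_range_of_lt x (by omega)]
    _ ≤ |B.coeff (π 0) y| * ‖B.e (π 0)‖ := by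
        rw [mul_comm, ← hm]
        exact mul_le_mul (hπ.abs_coeff_le (Nat.zero_le m)) (B.norm_e_ge _)
          B.c_norm_pos.le (abs_nonneg _)
    _ ≤ K * ‖y‖ := hG ▸ (hK y π hπ 1).1

theorem norm_sum_smul_e_le_of_abs_eq {A A' : Finset ℕ} (hA' : A' ⊆ A) {a : ℕ → ℝ} {t : ℝ}
    (ha : ∀ k ∈ A, |a k| = t) :
    ‖∑ k ∈ A', a k • B.e k‖ ≤ K * ‖∑ k ∈ A, a k • B.e k‖ := by
  have hgreedy : B.IsGreedySet (∑ k ∈ A, a k • B.e k) A' := by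
    intro j hj i _
    rw [coeff_sum_smul, coeff_sum_smul, if_pos (hA' hj), ha j (hA' hj)]
    split_ifs with hi
    · rw [ha i hi]
    · rw [abs_zero, ← ha j (hA' hj)]
      exact abs_nonneg _
  have h := hK.norm_S_le (fun k hk => by rw [coeff_sum_smul, if_neg hk]) hgreedy
  rwa [S_sum_smul, Finset.inter_eq_left.mpr hA'] at h

theorem mul_norm_sum_e_le_of_abs_eq {A A' : Finset ℕ} (hA' : A' ⊆ A) {a : ℕ → ℝ} {t : ℝ}
    (ht : 0 ≤ t) (ha : ∀ k ∈ A, |a k| = t) :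
    t * ‖∑ k ∈ A', B.e k‖ ≤ 2 * K * ‖∑ k ∈ A, a k • B.e k‖ := by
  classical
  have hsplit : t • ∑ k ∈ A', B.e k
      = ∑ k ∈ A' with 0 < a k, a k • B.e k - ∑ k ∈ A' with ¬0 < a k, a k • B.e k := by
    rw [Finset.smul_sum, ← Finset.sum_filter_add_sum_filter_not A' (fun k => 0 < a k),
      sub_eq_add_neg, ← Finset.sum_neg_distrib]
    congr 1
    · refine Finset.sum_congr rfl fun k hk => ?_
      obtain ⟨hk, hsign⟩ := Finset.mem_filter.mp hk
      rw [← abs_of_pos hsign, ha k (hA' hk)]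
    · refine Finset.sum_congr rfl fun k hk => ?_
      obtain ⟨hk, hsign⟩ := Finset.mem_filter.mp hk
      rw [← neg_smul, ← abs_of_nonpos (not_lt.mp hsign), ha k (hA' hk)]
  have hpos := hK.norm_sum_smul_e_le_of_abs_eq ((Finset.filter_subset (0 < a ·) A').trans hA') ha
  have hneg := hK.norm_sum_smul_e_le_of_abs_eq ((Finset.filter_subset (¬0 < a ·) A').trans hA') ha
  calc t * ‖∑ k ∈ A', B.e k‖ = ‖t • ∑ k ∈ A', B.e k‖ := by
        rw [norm_smul, Real.norm_of_nonneg ht]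
    _ ≤ 2 * K * ‖∑ k ∈ A, a k • B.e k‖ := by
        rw [hsplit]
        linarith [norm_sub_le (∑ k ∈ A' with 0 < a k, a k • B.e k)
          (∑ k ∈ A' with ¬0 < a k, a k • B.e k)]

/-- For `E = {k : t ≤ |xₖ|}`, the vector `∑ k ∈ E, t * sgn xₖ • e k` is an Abel transform of the
greedy sums of `x`, hence has norm at most `2 K ‖x‖`; removing the signs costs another `2 K`. -/
theorem mul_norm_sum_e_le_of_supported {x : X} {T : Finset ℕ} (hx : ∀ k ∉ T, B.coeff k x = 0)
    {t : ℝ} (ht : 0 < t) {A : Finset ℕ} (hA : ∀ k ∈ A, t ≤ |B.coeff k x|) :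
    t * ‖∑ k ∈ A, B.e k‖ ≤ 4 * K ^ 2 * ‖x‖ := by
  classical
  set E := T.filter fun k => t ≤ |B.coeff k x|
  have hmemE : ∀ k, k ∈ E ↔ t ≤ |B.coeff k x| := fun k => by
    refine ⟨fun hk => (Finset.mem_filter.mp hk).2, fun hk => Finset.mem_filter.mpr ⟨?_, hk⟩⟩
    by_contra hkT
    rw [hx k hkT, abs_zero] at hk
    linarith
  have hgreedy : B.IsGreedySet x E := fun j hj i hi =>
    ((not_le.mp (mt (hmemE i).mpr hi)).le).trans ((hmemE j).mp hj)
  obtain ⟨π, hπ, hprefix⟩ := B.exists_isGreedyPerm_image_range_eq hx hgreedy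
  have htop : ∀ m < E.card, t ≤ |B.coeff (π m) x| := fun m hm =>
    (hmemE _).mp (hprefix ▸ Finset.mem_image_of_mem π (Finset.mem_range.mpr hm))
  set w := ∑ k ∈ E, (t / |B.coeff k x| * B.coeff k x) • B.e k
  have hw : ‖w‖ ≤ 2 * (K * ‖x‖) := by
    have hwsum : w = ∑ m ∈ Finset.range E.card,
        (t / |B.coeff (π m) x|) • (B.coeff (π m) x • B.e (π m)) := by
      calc w = ∑ k ∈ (Finset.range E.card).image π,
            (t / |B.coeff k x| * B.coeff k x) • B.e k := by rw [hprefix]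
        _ = _ := by
          rw [Finset.sum_image fun a _ b _ h => hπ.1.1 h]
          simp only [smul_smul]
    rw [hwsum]
    refine norm_sum_range_smul_le_of_monotoneOn _ (fun i hi j hj hij => ?_) (fun i hi => ?_)
      fun m _ => (hK x π hπ m).1
    · exact div_le_div_of_nonneg_left ht.le (ht.trans_le (htop j hj)) (hπ.abs_coeff_le hij)
    · have hti := htop i hi
      exact ⟨by positivity, (div_le_one (ht.trans_le hti)).mpr hti⟩
  have hsign := hK.mul_norm_sum_e_le_of_abs_eq (fun k hk => (hmemE k).mpr (hA k hk)) ht.le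
    (a := fun k => t / |B.coeff k x| * B.coeff k x) fun k hk => by
      have hpos : 0 < |B.coeff k x| := ht.trans_le ((hmemE k).mp hk)
      rw [abs_mul, abs_div, abs_abs, abs_of_pos ht, div_mul_cancel₀ _ hpos.ne']
  have hK0 : 0 ≤ K := zero_le_one.trans hK.one_le
  calc t * ‖∑ k ∈ A, B.e k‖ ≤ 2 * K * ‖w‖ := hsign
    _ ≤ 2 * K * (2 * (K * ‖x‖)) := by gcongr
    _ = 4 * K ^ 2 * ‖x‖ := by ring

theorem mul_norm_sum_e_le (x : X) {t : ℝ} (ht : 0 < t) {A : Finset ℕ}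
    (hA : ∀ k ∈ A, t ≤ |B.coeff k x|) : t * ‖∑ k ∈ A, B.e k‖ ≤ 4 * K ^ 2 * ‖x‖ := by
  obtain ⟨n₀, hn₀⟩ := A.exists_nat_subset_range
  refine B.le_mul_norm_of_eventually_le_mul_norm_S_range
    (Filter.eventually_atTop.mpr ⟨n₀, fun n hn => ?_⟩)
  refine hK.mul_norm_sum_e_le_of_supported (fun k hk => coeff_S_of_notMem x hk) ht
    fun k hk => ?_
  rw [coeff_S_range_of_lt x ((Finset.mem_range.mp (hn₀ hk)).trans_le hn)]
  exact hA k hk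

theorem norm_S_le_log (x : X) {D : Finset ℕ} {N : ℕ} (hD : D.card ≤ N) :
    ‖B.S D x‖ ≤ (16 * K ^ 2 * (Nat.log 2 N + 1) + K * B.C_norm / B.c_norm) * ‖x‖ := by
  have hK0 : 0 ≤ K := zero_le_one.trans hK.one_le
  have hc := B.c_norm_pos
  have hC := B.C_norm_pos
  set J := Nat.log 2 N + 1
  have hcoeff : ∀ k ∈ D, |B.coeff k x| ≤ K * ‖x‖ / B.c_norm := fun k _ => by
    rw [le_div_iff₀ B.c_norm_pos, mul_comm]
    exact hK.c_norm_mul_abs_coeff_le x k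
  have h := norm_sum_smul_le_dyadic B.e D J (by positivity) hC.le hcoeff B.norm_e_le
    fun t ht A _ hA => hK.mul_norm_sum_e_le x ht hA
  have hN : (D.card : ℝ) ≤ 2 ^ J := by
    have := Nat.lt_pow_succ_log_self one_lt_two N
    exact_mod_cast hD.trans this.le
  calc ‖B.S D x‖
      ≤ 4 * J * (4 * K ^ 2 * ‖x‖) + D.card * (K * ‖x‖ / B.c_norm / 2 ^ J * B.C_norm) := h
    _ ≤ 4 * J * (4 * K ^ 2 * ‖x‖) + 2 ^ J * (K * ‖x‖ / B.c_norm / 2 ^ J * B.C_norm) := by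
        gcongr
    _ = (16 * K ^ 2 * (Nat.log 2 N + 1) + K * B.C_norm / B.c_norm) * ‖x‖ := by
        field_simp
        push_cast [J]
        ring

theorem hl_pos {k : ℕ} (hk : 1 ≤ k) : 0 < B.hl k := by
  have hK0 : 0 < K := zero_lt_one.trans_le hK.one_le
  refine lt_of_lt_of_le (div_pos B.c_norm_pos hK0) (le_csInf
    ⟨_, Finset.range k, Finset.card_range k, rfl⟩ ?_)
  rintro r ⟨Γ, hΓ, rfl⟩
  obtain ⟨j, hj⟩ := Finset.card_pos.mp (hΓ ▸ hk)
  have h := hK.norm_sum_smul_e_le_of_abs_eq (Finset.singleton_subset_iff.mpr hj)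
    (a := fun _ => 1) (fun _ _ => abs_one)
  simp only [one_smul, Finset.sum_singleton] at h
  rw [div_le_iff₀ hK0, mul_comm]
  exact (B.norm_e_ge j).trans h

theorem mu_le {N : ℕ} {C : ℝ} (hC : 0 ≤ C)
    (h : ∀ k, 1 ≤ k → k ≤ N → B.hr k ≤ C * B.hl k) : B.mu N ≤ C :=
  Real.sSup_le (fun _ ⟨k, h1, h2, hr⟩ => hr ▸ (div_le_iff₀ (hK.hl_pos h1)).mpr (h k h1 h2)) hC

theorem one_le_mu {N : ℕ} (hN : 1 ≤ N) : 1 ≤ B.mu N := by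
  refine le_trans ?_ (B.div_le_mu le_rfl hN)
  rw [one_le_div (hK.hl_pos le_rfl)]
  exact (B.hl_le_norm_sum_e (Finset.card_range 1)).trans
    (B.norm_sum_e_le_hr (Finset.card_range 1))

theorem norm_sum_e_le_mu_mul {N : ℕ} {Γ Γ' : Finset ℕ} (hcard : Γ.card = Γ'.card)
    (h1 : 1 ≤ Γ.card) (hN : Γ.card ≤ N) :
    ‖∑ j ∈ Γ, B.e j‖ ≤ B.mu N * ‖∑ j ∈ Γ', B.e j‖ := by
  have hmu := B.div_le_mu h1 hN
  rw [div_le_iff₀ (hK.hl_pos h1)] at hmu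
  exact (B.norm_sum_e_le_hr rfl).trans (hmu.trans
    (mul_le_mul_of_nonneg_left (B.hl_le_norm_sum_e hcard.symm) (B.mu_nonneg N)))

/-- Let `A` be the greedy set and `τ = |x_{π (N - 1)}|`. A subset of `Γ \ A` is matched by an
equally large subset of `A \ Γ`, where `x - z` keeps the coefficients of `x`, all of modulus at
least `τ`; democracy transfers the resulting bound, and on `Γ \ A` the coefficients of `x` are at
most `τ`. -/
theorem norm_S_sdiff_le {x : X} {π : ℕ → ℕ} (hπ : B.IsGreedyPerm x π) {N : ℕ}
    {Γ : Finset ℕ} (hΓ : Γ.card ≤ N) (b : ℕ → ℝ) :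
    ‖B.S (Γ \ (Finset.range N).image π) x‖
      ≤ 8 * K ^ 2 * B.mu N * ‖x - ∑ k ∈ Γ, b k • B.e k‖ := by
  set A := (Finset.range N).image π
  set u := x - ∑ k ∈ Γ, b k • B.e k
  have hAcard : A.card = N := by
    rw [Finset.card_image_of_injective _ hπ.1.1, Finset.card_range]
  have hmu := B.mu_nonneg N
  set τ := |B.coeff (π (N - 1)) x|
  have hτA : ∀ k ∈ A, τ ≤ |B.coeff k x| := by
    rintro _ hk
    obtain ⟨m, hm, rfl⟩ := Finset.mem_image.mp hk
    exact hπ.abs_coeff_le (Nat.le_sub_one_of_lt (Finset.mem_range.mp hm))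
  have hτ_notMem : ∀ k ∉ A, |B.coeff k x| ≤ τ := by
    intro k hk
    obtain ⟨p, rfl⟩ := hπ.1.2 k
    have : N ≤ p := not_lt.mp fun hp => hk (Finset.mem_image_of_mem π (Finset.mem_range.mpr hp))
    exact hπ.abs_coeff_le (by omega)
  rcases (abs_nonneg (B.coeff (π (N - 1)) x)).eq_or_lt with hτ0 | hτ0
  · have : B.S (Γ \ A) x = 0 := Finset.sum_eq_zero fun k hk => by
      have : |B.coeff k x| ≤ 0 := (hτ_notMem k (Finset.mem_sdiff.mp hk).2).trans hτ0.symm.le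
      rw [abs_nonpos_iff.mp this, zero_smul]
    rw [this, norm_zero]
    positivity
  have hsub : ∀ A' ⊆ Γ \ A, ‖∑ k ∈ A', B.e k‖ ≤ B.mu N * (4 * K ^ 2 * ‖u‖ / τ) := by
    intro A' hA'
    rcases A'.eq_empty_or_nonempty with rfl | hne
    · simp only [Finset.sum_empty, norm_zero]
      positivity
    have hcard : A'.card ≤ (A \ Γ).card := (Finset.card_le_card hA').trans
      (Finset.card_sdiff_le_card_sdiff_iff.mpr (hΓ.trans hAcard.ge))
    obtain ⟨A'', hA'', hcard''⟩ := Finset.exists_subset_card_eq hcard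
    have hA''u : τ * ‖∑ k ∈ A'', B.e k‖ ≤ 4 * K ^ 2 * ‖u‖ := by
      refine hK.mul_norm_sum_e_le u hτ0 fun k hk => ?_
      obtain ⟨hkA, hkΓ⟩ := Finset.mem_sdiff.mp (hA'' hk)
      rw [coeff_sub_sum_smul_of_notMem x b hkΓ]
      exact hτA k hkA
    calc ‖∑ k ∈ A', B.e k‖ ≤ B.mu N * ‖∑ k ∈ A'', B.e k‖ :=
          hK.norm_sum_e_le_mu_mul hcard''.symm (Finset.card_pos.mpr hne)
            ((Finset.card_le_card (hA'.trans Finset.sdiff_subset)).trans hΓ)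
      _ ≤ B.mu N * (4 * K ^ 2 * ‖u‖ / τ) := by
          gcongr
          rwa [le_div_iff₀ hτ0, mul_comm]
  calc ‖B.S (Γ \ A) x‖ ≤ 2 * τ * (B.mu N * (4 * K ^ 2 * ‖u‖ / τ)) :=
        norm_sum_smul_le_of_abs_le B.e _ hτ0.le
          (fun k hk => hτ_notMem k (Finset.mem_sdiff.mp hk).2) hsub
    _ = 8 * K ^ 2 * B.mu N * ‖u‖ := by
        have : τ ≠ 0 := hτ0.ne'
        field_simp
        ring

theorem norm_sub_G_le {x : X} {π : ℕ → ℕ} (hπ : B.IsGreedyPerm x π) {N : ℕ} {Γ : Finset ℕ}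
    (hΓ : Γ.card ≤ N) (b : ℕ → ℝ) :
    ‖x - B.G π N x‖ ≤ B.lebesgueBound K N * ‖x - ∑ k ∈ Γ, b k • B.e k‖ := by
  set A := (Finset.range N).image π
  set z := ∑ k ∈ Γ, b k • B.e k
  have hz : z - B.S A z = B.S (Γ \ A) z := by
    rw [sum_smul_sub_S, S_sum_smul, Finset.inter_eq_left.mpr Finset.sdiff_subset]
  have hid : x - B.G π N x = (x - z) - B.S A (x - z) - B.S (Γ \ A) (x - z) + B.S (Γ \ A) x := by
    rw [B.G_eq_S hπ.1.1, S_sub, S_sub, ← hz]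
    abel
  have hA : A.card ≤ N := Finset.card_image_le.trans (Finset.card_range N).le
  have h1 := hK.norm_S_le_log (x - z) hA
  have h2 := hK.norm_S_le_log (x - z) (D := Γ \ A)
    ((Finset.card_le_card Finset.sdiff_subset).trans hΓ)
  have h3 := hK.norm_S_sdiff_le hπ hΓ b
  calc ‖x - B.G π N x‖
      ≤ ‖x - z‖ + ‖B.S A (x - z)‖ + ‖B.S (Γ \ A) (x - z)‖ + ‖B.S (Γ \ A) x‖ := by
        rw [hid]
        linarith [norm_add_le (x - z - B.S A (x - z) - B.S (Γ \ A) (x - z)) (B.S (Γ \ A) x),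
          norm_sub_le (x - z - B.S A (x - z)) (B.S (Γ \ A) (x - z)),
          norm_sub_le (x - z) (B.S A (x - z))]
    _ ≤ B.lebesgueBound K N * ‖x - z‖ := by
        rw [lebesgueBound]
        linarith

theorem one_le_lebesgueBound (N : ℕ) : 1 ≤ B.lebesgueBound K N := by
  have hK0 : 0 ≤ K := zero_le_one.trans hK.one_le
  have hc := B.c_norm_pos
  have hC := B.C_norm_pos
  have hmu := B.mu_nonneg N
  rw [lebesgueBound]
  linarith [show 0 ≤ 16 * K ^ 2 * (Nat.log 2 N + 1) + K * B.C_norm / B.c_norm by positivity,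
    show 0 ≤ 8 * K ^ 2 * B.mu N by positivity]

theorem norm_sub_G_le_mul_sigma {x : X} {π : ℕ → ℕ} (hπ : B.IsGreedyPerm x π) (N : ℕ) :
    ‖x - B.G π N x‖ ≤ B.lebesgueBound K N * B.sigma N x := by
  have hL := zero_lt_one.trans_le (hK.one_le_lebesgueBound N)
  rw [mul_comm, ← div_le_iff₀ hL]
  refine le_csInf ⟨_, ∅, 0, by simp, rfl⟩ ?_
  rintro _ ⟨Γ, b, hΓ, rfl⟩
  rw [div_le_iff₀ hL, mul_comm]
  exact hK.norm_sub_G_le hπ hΓ b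

theorem norm_sub_G_le_mul_sigmaT {x : X} {π : ℕ → ℕ} (hπ : B.IsGreedyPerm x π) (N : ℕ) :
    ‖x - B.G π N x‖ ≤ B.lebesgueBound K N * B.sigmaT N x :=
  (hK.norm_sub_G_le_mul_sigma hπ N).trans (mul_le_mul_of_nonneg_left (B.sigma_le_sigmaT N x)
    (zero_le_one.trans (hK.one_le_lebesgueBound N)))

theorem div_le_lebesgueBound {x : X} {π : ℕ → ℕ} (hπ : B.IsGreedyPerm x π) {N : ℕ} {s : ℝ}
    (hs : B.sigma N x ≤ s) : ‖x - B.G π N x‖ / s ≤ B.lebesgueBound K N := by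
  have hL := hK.one_le_lebesgueBound N
  rcases (B.sigma_nonneg N x).trans hs |>.eq_or_lt with hs0 | hs0
  · rw [← hs0, div_zero]
    linarith
  rw [div_le_iff₀ hs0]
  exact (hK.norm_sub_G_le_mul_sigma hπ N).trans (by gcongr)

theorem lebesgueBound_mem_upperBounds_eN_set (N : ℕ) :
    B.lebesgueBound K N ∈ upperBounds ({1} ∪ {r | ∃ (x : X) (π : ℕ → ℕ), B.IsGreedyPerm x π ∧
      B.sigma N x ≠ 0 ∧ r = ‖x - B.G π N x‖ / B.sigma N x}) := by
  rintro _ (rfl | ⟨x, π, hπ, -, rfl⟩)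
  · exact hK.one_le_lebesgueBound N
  · exact hK.div_le_lebesgueBound hπ le_rfl

theorem bddAbove_tildeEN_set (N : ℕ) :
    BddAbove ({1} ∪ {r | ∃ (x : X) (π : ℕ → ℕ), B.IsGreedyPerm x π ∧
      B.sigmaT N x ≠ 0 ∧ r = ‖x - B.G π N x‖ / B.sigmaT N x}) := by
  refine ⟨B.lebesgueBound K N, ?_⟩
  rintro _ (rfl | ⟨x, π, hπ, -, rfl⟩)
  · exact hK.one_le_lebesgueBound N
  · exact hK.div_le_lebesgueBound hπ (B.sigma_le_sigmaT N x)

theorem eN_le_lebesgueBound (N : ℕ) : B.eN N ≤ B.lebesgueBound K N :=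
  csSup_le ⟨1, Or.inl rfl⟩ (hK.lebesgueBound_mem_upperBounds_eN_set N)

theorem one_le_tildeEN (N : ℕ) : 1 ≤ B.tildeEN N :=
  le_csSup (hK.bddAbove_tildeEN_set N) (Or.inl rfl)

theorem norm_sub_G_le_tildeEN_mul_sigmaT {x : X} {π : ℕ → ℕ} (hπ : B.IsGreedyPerm x π)
    (N : ℕ) : ‖x - B.G π N x‖ ≤ B.tildeEN N * B.sigmaT N x := by
  rcases (B.sigmaT_nonneg N x).eq_or_lt with hs0 | hs0
  · simpa [← hs0] using hK.norm_sub_G_le_mul_sigmaT hπ N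
  rw [← div_le_iff₀ hs0]
  exact le_csSup (hK.bddAbove_tildeEN_set N) (Or.inr ⟨x, π, hπ, hs0.ne', rfl⟩)

theorem tildeEN_le_eN (N : ℕ) : B.tildeEN N ≤ B.eN N := by
  have h1 : 1 ≤ B.eN N := le_csSup ⟨_, hK.lebesgueBound_mem_upperBounds_eN_set N⟩ (Or.inl rfl)
  refine csSup_le ⟨1, Or.inl rfl⟩ ?_
  rintro _ (rfl | ⟨x, π, hπ, -, rfl⟩)
  · exact h1
  rcases (B.sigma_nonneg N x).eq_or_lt with hs0 | hs0
  · have h := hK.norm_sub_G_le_mul_sigma hπ N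
    rw [← hs0, mul_zero] at h
    rw [norm_le_zero_iff.mp h, norm_zero, zero_div]
    linarith
  calc ‖x - B.G π N x‖ / B.sigmaT N x ≤ ‖x - B.G π N x‖ / B.sigma N x :=
        div_le_div_of_nonneg_left (norm_nonneg _) hs0 (B.sigma_le_sigmaT N x)
    _ ≤ B.eN N := le_csSup ⟨_, hK.lebesgueBound_mem_upperBounds_eN_set N⟩
        (Or.inr ⟨x, π, hπ, hs0.ne', rfl⟩)

/-- Here `P = Γ' ∪ D` with fresh indices `D`, and the expansional error is witnessed by projecting
away `D ∪ (Γ \ Γ')`. -/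
theorem norm_sum_e_le_of_card_eq {N : ℕ} {Γ Γ' : Finset ℕ} (hcard : Γ.card = Γ'.card)
    (hN : Γ'.card ≤ N) :
    ‖∑ j ∈ Γ, B.e j‖ ≤ (K + 2 * B.tildeEN N) * ‖∑ j ∈ Γ', B.e j‖ := by
  classical
  obtain ⟨D, hDΓ, hDcard⟩ := exists_finset_disjoint_card_eq (Γ ∪ Γ') (N - Γ'.card)
  obtain ⟨hDΓ, hDΓ'⟩ := Finset.disjoint_union_right.mp hDΓ
  set P := Γ' ∪ D
  set Q := Γ \ Γ'
  set Δ := D ∪ Q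
  have hPQ : Disjoint P Q := Finset.disjoint_union_left.mpr
    ⟨Finset.disjoint_sdiff, hDΓ.mono_right Finset.sdiff_subset⟩
  have hΓ'Δ : Disjoint Γ' Δ := Finset.disjoint_union_right.mpr
    ⟨hDΓ'.symm, Finset.disjoint_sdiff⟩
  have hPcard : P.card = N := by
    rw [Finset.card_union_of_disjoint hDΓ'.symm, hDcard]
    omega
  have hΔcard : Δ.card ≤ N := by
    have : Q.card ≤ Γ'.card := hcard ▸ Finset.card_le_card Finset.sdiff_subset
    calc Δ.card ≤ D.card + Q.card := Finset.card_union_le D Q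
      _ ≤ N := by omega
  set c : ℕ → ℝ := fun j => if j ∈ P then 2 else 1
  set x := ∑ j ∈ P ∪ Q, c j • B.e j
  have hgreedy : B.IsGreedySet x P := by
    intro j hj i hi
    simp only [x, coeff_sum_smul, c, if_pos (Finset.mem_union_left Q hj), if_pos hj, if_neg hi]
    split_ifs <;> norm_num
  obtain ⟨π, hπ, hprefix⟩ := B.exists_isGreedyPerm_image_range_eq
    (fun k hk => by rw [coeff_sum_smul, if_neg hk]) hgreedy
  have hG : x - B.G π N x = ∑ j ∈ Q, B.e j := by
    rw [B.G_eq_S hπ.1.1, ← hPcard, hprefix, sum_smul_sub_S, Finset.union_sdiff_cancel_left hPQ]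
    exact Finset.sum_congr rfl fun j hj => by
      simp [c, Finset.disjoint_right.mp hPQ hj]
  have hΔ : x - B.S Δ x = (2 : ℝ) • ∑ j ∈ Γ', B.e j := by
    rw [sum_smul_sub_S, Finset.union_assoc, Finset.union_sdiff_cancel_right hΓ'Δ,
      Finset.smul_sum]
    exact Finset.sum_congr rfl fun j hj => by simp [c, P, hj]
  have hQ : ‖∑ j ∈ Q, B.e j‖ ≤ B.tildeEN N * (2 * ‖∑ j ∈ Γ', B.e j‖) := by
    refine hG ▸ (hK.norm_sub_G_le_tildeEN_mul_sigmaT hπ N).trans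
      (mul_le_mul_of_nonneg_left ?_ (zero_le_one.trans (hK.one_le_tildeEN N)))
    refine (B.sigmaT_le_norm_sub_S x hΔcard).trans_eq ?_
    rw [hΔ, norm_smul]
    norm_num
  have hinter : ‖∑ j ∈ Γ ∩ Γ', B.e j‖ ≤ K * ‖∑ j ∈ Γ', B.e j‖ := by
    simpa using hK.norm_sum_smul_e_le_of_abs_eq Finset.inter_subset_right
      (a := fun _ => 1) fun _ _ => abs_one
  rw [← Finset.sum_inter_add_sum_sdiff Γ Γ']
  linarith [norm_add_le (∑ j ∈ Γ ∩ Γ', B.e j) (∑ j ∈ Q, B.e j)]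

theorem mu_le_tildeEN (N : ℕ) : B.mu N ≤ (K + 2) * B.tildeEN N := by
  have ht := hK.one_le_tildeEN N
  have hK1 := hK.one_le
  refine (hK.mu_le (C := K + 2 * B.tildeEN N) (by linarith) fun k _ hkN =>
    B.hr_le_mul_hl (by linarith) fun Γ Γ' hΓ hΓ' =>
      hK.norm_sum_e_le_of_card_eq (hΓ.trans hΓ'.symm) (hΓ' ▸ hkN)).trans ?_
  nlinarith

theorem lebesgueBound_le {N : ℕ} (hN : 1 ≤ N) :
    B.lebesgueBound K N
      ≤ (1 + 72 * K ^ 2 + 2 * (K * B.C_norm / B.c_norm)) / Real.log 2 * B.mu N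
        * Real.log (N + 1) := by
  have hK0 : 0 ≤ K := zero_le_one.trans hK.one_le
  have hmu := hK.one_le_mu hN
  have hc := B.c_norm_pos
  have hC := B.C_norm_pos
  have hlog2 : 0 < Real.log 2 := Real.log_pos one_lt_two
  have hlogN : Real.log 2 ≤ Real.log (N + 1) :=
    Real.log_le_log two_pos (by norm_cast; omega)
  have hlog : (Nat.log 2 N : ℝ) * Real.log 2 ≤ Real.log (N + 1) := by
    rw [← Real.log_pow]
    refine Real.log_le_log (by positivity) ?_
    exact_mod_cast (Nat.pow_log_le_self 2 (by omega)).trans (Nat.le_succ N)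
  have hmulog : Real.log (N + 1) ≤ B.mu N * Real.log (N + 1) :=
    le_mul_of_one_le_left (hlog2.le.trans hlogN) hmu
  rw [div_mul_eq_mul_div, div_mul_eq_mul_div, le_div_iff₀ hlog2, lebesgueBound]
  have hQ : 0 ≤ K * B.C_norm / B.c_norm := by positivity
  nlinarith [mul_le_mul_of_nonneg_left hlog (by positivity : (0 : ℝ) ≤ 32 * K ^ 2),
    mul_le_mul_of_nonneg_left (hlogN.trans hmulog)
      (by positivity : 0 ≤ 1 + 32 * K ^ 2 + 2 * (K * B.C_norm / B.c_norm)),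
    mul_le_mul_of_nonneg_left hmulog (by positivity : (0 : ℝ) ≤ 32 * K ^ 2),
    mul_le_mul_of_nonneg_left hlogN (by positivity : (0 : ℝ) ≤ 8 * K ^ 2 * B.mu N)]

end QuasiGreedyWith

end QGBasis

theorem stmt16_general {X : Type*} [NormedAddCommGroup X] [NormedSpace ℝ X]
    (B : QGBasis X) (K : ℝ) (hK : B.QuasiGreedyWith K) :
    ∃ c C : ℝ, 0 < c ∧ 0 < C ∧ ∀ N : ℕ, 1 ≤ N →
      c * B.mu N ≤ B.tildeEN N ∧
      B.tildeEN N ≤ B.eN N ∧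
      B.eN N ≤ C * B.mu N * Real.log (N + 1) := by
  have hK1 := hK.one_le
  have hc := B.c_norm_pos
  have hC := B.C_norm_pos
  refine ⟨1 / (K + 2), (1 + 72 * K ^ 2 + 2 * (K * B.C_norm / B.c_norm)) / Real.log 2,
    by positivity, div_pos (by positivity) (Real.log_pos one_lt_two), fun N hN => ⟨?_,
      hK.tildeEN_le_eN N, (hK.eN_le_lebesgueBound N).trans (hK.lebesgueBound_le hN)⟩⟩
  rw [one_div_mul_eq_div, div_le_iff₀ (by positivity), mul_comm]
  exact hK.mu_le_tildeEN N

/-- `μ(N) ≲ ẽ_N ≤ e_N ≲ μ(N) log N` for a quasi-greedy basis. -/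
theorem stmt16 {X : Type*} [NormedAddCommGroup X] [NormedSpace ℝ X] [CompleteSpace X]
    (B : QGBasis X) (K : ℝ) (hK : B.QuasiGreedyWith K) :
    ∃ c C : ℝ, 0 < c ∧ 0 < C ∧ ∀ N : ℕ, 1 ≤ N →
      c * B.mu N ≤ B.tildeEN N ∧
      B.tildeEN N ≤ B.eN N ∧
      B.eN N ≤ C * B.mu N * Real.log (N + 1) :=
  stmt16_general B K hK
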